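/- If x is a connected 2-backbone shape of genus g with n arcs, then the glued diagram η(x), obtained by concatenating the two backbones (the two old rainbows becoming ordinary arcs) and adding a new rainbow over the resulting single backbone, is an A-shape over one backbone of genus g+1 with n+1 arcs; moreover η preserves the number of boundary components (r(η(x)) = r(x)). -/
import Mathlib


namespace RNA

noncomputable section

/-- The forward orbit of `x` under iteration of `f`. -/
def orbitOf (f : ℕ → ℕ) (x : ℕ) : Set ℕ := {y | ∃ j : ℕ, f^[j] x = y}

/-- The number of cycles (orbits) of `f` among the points `< k`. -/
def numCyclesOn (f : ℕ → ℕ) (k : ℕ) : ℕ :=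
  Set.ncard {S : Set ℕ | ∃ x, x < k ∧ S = orbitOf f x}

/-- The number of cycles of length at least `3` among the points `< k` (multiloops). -/
def numMultiOn (f : ℕ → ℕ) (k : ℕ) : ℕ :=
  Set.ncard {S : Set ℕ | (∃ x, x < k ∧ S = orbitOf f x) ∧ 3 ≤ S.ncard}

/-- The cyclic permutation `(0 1 ⋯ k-1)`, as a function on `ℕ` fixing everything `≥ k`. -/
def gammaOne (k : ℕ) : ℕ → ℕ := fun i => if i + 1 = k then 0 else if i < k then i + 1 else i

/-- The permutation with the two cycles `(0 ⋯ m-1)` and `(m ⋯ k-1)`. -/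
def gammaTwo (m k : ℕ) : ℕ → ℕ := fun i =>
  if i + 1 = m then 0 else if i + 1 = k then m else if i < k then i + 1 else i

/-- A planted 1-backbone diagram with `n` arcs: an involution on the vertices
`0, 1, …, 2n-1` (shifting the paper's labels `1, …, 2n` by one). -/
structure OneD where
  n : ℕ
  f : ℕ → ℕ

namespace OneD

/-- Well-formedness: `n ≥ 1`, `f` is a fixed-point-free involution of `{0, …, 2n-1}`
(extended by the identity elsewhere) pairing `0` with `2n-1` (the rainbow). -/
def WF (D : OneD) : Prop :=
  1 ≤ D.n ∧ (∀ i, i < 2 * D.n → D.f i < 2 * D.n) ∧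
    (∀ i, 2 * D.n ≤ i → D.f i = i) ∧ (∀ i, D.f (D.f i) = i) ∧
    (∀ i, i < 2 * D.n → D.f i ≠ i) ∧ D.f 0 = 2 * D.n - 1

/-- `{i,j}` is an arc. -/
def arc (D : OneD) (i j : ℕ) : Prop := i < 2 * D.n ∧ D.f i = j

/-- A shape: no 1-arc other than possibly the rainbow, and no stack
(no pair of arcs `{i,j}`, `{i+1,j-1}` with `i+1 < j-1`). -/
def IsShape (D : OneD) : Prop :=
  (∀ i, D.arc i (i + 1) → i = 0 ∧ i + 1 = 2 * D.n - 1) ∧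
  (∀ i j, D.arc i j → D.arc (i + 1) (j - 1) → ¬ (i + 1 < j - 1))

/-- The boundary permutation `α ∘ γ`. -/
def bd (D : OneD) : ℕ → ℕ := D.f ∘ gammaOne (2 * D.n)

/-- The number `r` of boundary components. -/
def r (D : OneD) : ℕ := numCyclesOn D.bd (2 * D.n)

/-- The number of multiloops: boundary components of length at least 3. -/
def nMulti (D : OneD) : ℕ := numMultiOn D.bd (2 * D.n)

/-- The genus `g`, defined by `2 - 2g - r = 1 - n`. -/
def HasGenus (D : OneD) (g : ℕ) : Prop := 2 * g + D.r = D.n + 1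

/-- A-shape: the vertex following the partner of vertex `1` (paper's vertex `2`)
is paired with vertex `2n-2` (paper's vertex `2n-1`); only for `n ≥ 2`. -/
def IsA (D : OneD) : Prop := 2 ≤ D.n ∧ D.f (D.f 1 + 1) = 2 * D.n - 2

/-- B-shape: a shape with `n ≥ 2` arcs which is not an A-shape. -/
def IsB (D : OneD) : Prop := 2 ≤ D.n ∧ D.f (D.f 1 + 1) ≠ 2 * D.n - 2

end OneD

/-- The set of 1-backbone shapes of genus `g`. -/
def oneShapeSet (g : ℕ) : Set OneD := {D | D.WF ∧ D.IsShape ∧ D.HasGenus g}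

/-- The set of 1-backbone shapes of genus `g` with `n` arcs. -/
def oneShapeSetN (g n : ℕ) : Set OneD := {D | D ∈ oneShapeSet g ∧ D.n = n}

/-- The set of A-shapes of genus `g`. -/
def ASet (g : ℕ) : Set OneD := {D | D ∈ oneShapeSet g ∧ D.IsA}

/-- The set `𝒜_g(n)` of A-shapes of genus `g` with `n` arcs. -/
def ASetN (g n : ℕ) : Set OneD := {D | D ∈ oneShapeSetN g n ∧ D.IsA}

/-- The set `ℬ_g(n)` of B-shapes of genus `g` with `n` arcs. -/
def BSetN (g n : ℕ) : Set OneD := {D | D ∈ oneShapeSetN g n ∧ D.IsB}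

/-- `s_g(n)`: the number of 1-backbone shapes of genus `g` with `n` arcs. -/
def sCount (g n : ℕ) : ℕ := (oneShapeSetN g n).ncard

/-- `a_g(n)`: the number of A-shapes of genus `g` with `n` arcs. -/
def aCount (g n : ℕ) : ℕ := (ASetN g n).ncard

/-- A 2-backbone diagram with `n` arcs and cut point `m`: an involution on the
vertices `0, …, 2n-1`, with backbones `{0, …, m-1}` and `{m, …, 2n-1}`. -/
structure TwoD where
  n : ℕ
  m : ℕ
  f : ℕ → ℕ

namespace TwoD

/-- Well-formedness of a 2-backbone matching: two nonempty backbones and `f` a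
fixed-point-free involution of `{0, …, 2n-1}` (extended by the identity). -/
def WF (D : TwoD) : Prop :=
  1 ≤ D.m ∧ D.m < 2 * D.n ∧ (∀ i, i < 2 * D.n → D.f i < 2 * D.n) ∧
    (∀ i, 2 * D.n ≤ i → D.f i = i) ∧ (∀ i, D.f (D.f i) = i) ∧
    (∀ i, i < 2 * D.n → D.f i ≠ i)

/-- `{i,j}` is an arc. -/
def arc (D : TwoD) (i j : ℕ) : Prop := i < 2 * D.n ∧ D.f i = j

/-- `i` and `j` lie in the same backbone. -/
def sameBB (D : TwoD) (i j : ℕ) : Prop := (i < D.m ∧ j < D.m) ∨ (D.m ≤ i ∧ D.m ≤ j)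

/-- Connectivity: some arc has one endpoint in each backbone. -/
def Connected (D : TwoD) : Prop := ∃ i j, D.arc i j ∧ i < D.m ∧ D.m ≤ j

/-- A 2-backbone shape: both rainbows `{0, m-1}` and `{m, 2n-1}` are present,
there is no 1-arc (an arc `{i,i+1}` within one backbone) other than possibly the
rainbows, and no stack. -/
def IsShape (D : TwoD) : Prop :=
  2 ≤ D.m ∧ D.m + 2 ≤ 2 * D.n ∧ D.f 0 = D.m - 1 ∧ D.f D.m = 2 * D.n - 1 ∧
  (∀ i, D.arc i (i + 1) → D.sameBB i (i + 1) →
      (i = 0 ∧ i + 1 = D.m - 1) ∨ (i = D.m ∧ i + 1 = 2 * D.n - 1)) ∧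
  (∀ i j, D.arc i j → D.arc (i + 1) (j - 1) → D.sameBB i (i + 1) →
      D.sameBB (j - 1) j → ¬ (i + 1 < j - 1))

/-- The boundary permutation `α ∘ γ`. -/
def bd (D : TwoD) : ℕ → ℕ := D.f ∘ gammaTwo D.m (2 * D.n)

/-- The number `r` of boundary components. -/
def r (D : TwoD) : ℕ := numCyclesOn D.bd (2 * D.n)

/-- The number of multiloops: boundary components of length at least 3. -/
def nMulti (D : TwoD) : ℕ := numMultiOn D.bd (2 * D.n)

/-- The genus `g`, defined by `2 - 2g - r = 2 - n`. -/
def HasGenus (D : TwoD) (g : ℕ) : Prop := 2 * g + D.r = D.n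

end TwoD

/-- The set `𝒬_g(n)` of connected 2-backbone shapes of genus `g` with `n` arcs. -/
def twoShapeSetN (g n : ℕ) : Set TwoD :=
  {D | D.WF ∧ D.IsShape ∧ D.Connected ∧ D.HasGenus g ∧ D.n = n}

/-- `q_g(n)`: the number of connected 2-backbone shapes of genus `g` with `n` arcs. -/
def qCount (g n : ℕ) : ℕ := (twoShapeSetN g n).ncard

/-- The gluing map `η`: concatenate the two backbones (the two old rainbows become
ordinary arcs) and add a new rainbow over the resulting single backbone. -/
def glue (D : TwoD) : OneD :=
  ⟨D.n + 1, fun i =>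
    if i = 0 then 2 * D.n + 1
    else if i = 2 * D.n + 1 then 0
    else if i ≤ 2 * D.n then D.f (i - 1) + 1
    else i⟩

/-- Place an ordered pair of 1-backbone diagrams on two backbones,
each keeping its own rainbow. -/
def combine (S T : OneD) : TwoD :=
  ⟨S.n + T.n, 2 * S.n, fun i =>
    if i < 2 * S.n then S.f i
    else if i < 2 * (S.n + T.n) then T.f (i - 2 * S.n) + 2 * S.n
    else i⟩

/-- The set `𝒬'_g(N)`: the disjoint union of the set of connected 2-backbone shapes
of genus `g` with `N` arcs and the set of ordered pairs of 1-backbone shapes whose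
genera are positive and sum to `g+1` and whose arc numbers sum to `N`. -/
def QprimeSetN (g N : ℕ) : Set (TwoD ⊕ OneD × OneD) :=
  {x | Sum.elim
        (fun D : TwoD => D.WF ∧ D.IsShape ∧ D.Connected ∧ D.HasGenus g ∧ D.n = N)
        (fun p : OneD × OneD =>
          p.1.WF ∧ p.1.IsShape ∧ p.2.WF ∧ p.2.IsShape ∧
          (∃ g₁ g₂, 1 ≤ g₁ ∧ 1 ≤ g₂ ∧ g₁ + g₂ = g + 1 ∧
            p.1.HasGenus g₁ ∧ p.2.HasGenus g₂) ∧
          p.1.n + p.2.n = N) x}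

/-- The gluing map `η` on `𝒬'`: glue a connected 2-backbone shape directly, and glue
a pair of 1-backbone shapes after placing them on two backbones. -/
def etaMap : TwoD ⊕ OneD × OneD → OneD := Sum.elim glue fun p => glue (combine p.1 p.2)

/-- The 2-backbone diagram underlying an element of `𝒬'`. -/
def underlyingTwoD : TwoD ⊕ OneD × OneD → TwoD := Sum.elim id fun p => combine p.1 p.2

/-- Old label of the new vertex `k` after deleting the two points `a < b`. -/
def insTwo (a b k : ℕ) : ℕ := if k < a then k else if k + 1 < b then k + 1 else k + 2

/-- New label of the old vertex `j` after deleting the two points `a < b`. -/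
def delTwo (a b j : ℕ) : ℕ := j - (if a < j then 1 else 0) - (if b < j then 1 else 0)

/-- The involution obtained from `f` by deleting the two paired points `a < b`
and relabeling. -/
def deleteTwo (f : ℕ → ℕ) (a b : ℕ) : ℕ → ℕ := fun k => delTwo a b (f (insTwo a b k))

/-- The map `θ`: remove from an A-shape the arc joining the vertex following the
partner of vertex `1` (paper's vertex `2`) to the vertex `2n-2` (paper's `2n-1`),
deleting its two endpoints and relabeling. -/
def theta (D : OneD) : OneD := ⟨D.n - 1, deleteTwo D.f (D.f 1 + 1) (2 * D.n - 2)⟩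

/-- The new cut point after deleting the points `a` and `b`. -/
def mshift (m a b : ℕ) : ℕ := m - (if a < m then 1 else 0) - (if b < m then 1 else 0)

/-- One reduction step: delete a 1-arc (an arc `{i,i+1}` within one backbone), or
collapse a stack `{i,j}`, `{i+1,j-1}` by deleting the inner arc `{i+1,j-1}`. -/
def Step (M M' : TwoD) : Prop :=
  (∃ i, M.arc i (i + 1) ∧ M.sameBB i (i + 1) ∧
      M' = ⟨M.n - 1, mshift M.m i (i + 1), deleteTwo M.f i (i + 1)⟩) ∨
  (∃ i j, M.arc i j ∧ M.arc (i + 1) (j - 1) ∧ i + 1 < j - 1 ∧ M.sameBB i (i + 1) ∧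
      M.sameBB (j - 1) j ∧
      M' = ⟨M.n - 1, mshift M.m (i + 1) (j - 1), deleteTwo M.f (i + 1) (j - 1)⟩)

/-- A pure preshape: no 1-arc and no stack remain. -/
def Reduced (P : TwoD) : Prop :=
  (∀ i, ¬ (P.arc i (i + 1) ∧ P.sameBB i (i + 1))) ∧
  (∀ i j, P.arc i j → P.arc (i + 1) (j - 1) → P.sameBB i (i + 1) →
      P.sameBB (j - 1) j → ¬ (i + 1 < j - 1))

/-- Relabeling of an old vertex of a preshape after planting rainbows. -/
def newlab (m o : ℕ) : ℕ := if o < m then o + 1 else o + 3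

/-- Plant a rainbow over each backbone of a pure preshape. -/
def plant (P : TwoD) : TwoD :=
  ⟨P.n + 2, P.m + 2, fun k =>
    if k = 0 then P.m + 1
    else if k = P.m + 1 then 0
    else if k = P.m + 2 then 2 * P.n + 3
    else if k = 2 * P.n + 3 then P.m + 2
    else if k ≤ P.m then newlab P.m (P.f (k - 1))
    else if k ≤ 2 * P.n + 2 then newlab P.m (P.f (k - 3))
    else k⟩

/-- `s` is the shape of the 2-backbone matching `M`: iteratively collapse stacks and
delete 1-arcs until none remains, then add a rainbow over each backbone. -/
def ShapeOf (M s : TwoD) : Prop :=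
  ∃ P : TwoD, Relation.ReflTransGen Step M P ∧ Reduced P ∧ s = plant P

/-- `q_s(n)`: the number of 2-backbone matchings with `n` arcs whose shape is `s`. -/
def fiberCount (s : TwoD) (n : ℕ) : ℕ :=
  Set.ncard {M : TwoD | M.WF ∧ M.n = n ∧ ShapeOf M s}

/-- `w_g(n)`: the number of connected 2-backbone matchings with `n` arcs and genus `g`. -/
def wCount (g n : ℕ) : ℕ :=
  Set.ncard {M : TwoD | M.WF ∧ M.Connected ∧ M.HasGenus g ∧ M.n = n}

/-- `W_g(z) = Σ_n w_g(n) zⁿ`, as a formal power series. -/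
def Wseries (g : ℕ) : PowerSeries ℤ := PowerSeries.mk fun n => (wCount g n : ℤ)

/-- The Catalan generating function `C₀(z) = Σ_n Catalan(n) zⁿ`. -/
def catGF : PowerSeries ℤ := PowerSeries.mk fun n => (catalan n : ℤ)

/-- `q̃_g(l)`: the number of connected 2-backbone shapes of genus `g` having `l` arcs
besides their two rainbows. -/
def qlCount (g l : ℕ) : ℕ := qCount g (l + 2)

end


section AuxGlue

lemma mem_orbit_self (f : ℕ → ℕ) (x : ℕ) : x ∈ orbitOf f x := ⟨0, rfl⟩

lemma orbit_invariant {f : ℕ → ℕ} (S : Set ℕ) (hS : ∀ x ∈ S, f x ∈ S) {v : ℕ}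
    (hv : v ∈ S) : orbitOf f v ⊆ S := by
  rintro y ⟨j, rfl⟩
  induction j with
  | zero => exact hv
  | succ j ih => rw [Function.iterate_succ_apply']; exact hS _ ih

lemma orbit_fixed {f : ℕ → ℕ} {v : ℕ} (h : f v = v) : orbitOf f v = {v} := by
  apply subset_antisymm
  · exact orbit_invariant ({v} : Set ℕ)
      (by rintro x hx; rw [Set.mem_singleton_iff] at hx ⊢; rw [hx, h]) rfl
  · rintro y hy; rw [Set.mem_singleton_iff] at hy; rw [hy]; exact mem_orbit_self f v

lemma orbit_return {f : ℕ → ℕ} {k : ℕ} (hmap : ∀ i, i < k → f i < k)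
    (hinj : Function.Injective f) {v : ℕ} (hv : v < k) :
    ∃ j, 0 < j ∧ f^[j] v = v := by
  have hlt : ∀ j, f^[j] v < k := by
    intro j; induction j with
    | zero => exact hv
    | succ j ih => rw [Function.iterate_succ_apply']; exact hmap _ ih
  obtain ⟨a, _, b, _, hab, he⟩ :=
    Finset.exists_ne_map_eq_of_card_lt_of_maps_to
      (s := Finset.range (k+1)) (t := Finset.range k)
      (by simp [Finset.card_range]) (fun a _ => Finset.mem_range.2 (hlt a))
  have main : ∀ a b : ℕ, a < b → f^[a] v = f^[b] v → ∃ j, 0 < j ∧ f^[j] v = v := by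
    intro a b h he
    refine ⟨b - a, by omega, ?_⟩
    have h2 : f^[a] (f^[b-a] v) = f^[a] v := by
      rw [← Function.iterate_add_apply, show a + (b-a) = b by omega]
      exact he.symm
    exact (hinj.iterate a) h2
  rcases Nat.lt_or_ge a b with h|h
  · exact main a b h he
  · exact main b a (by omega) he.symm

lemma orbit_eq_of_mem {f : ℕ → ℕ} {k : ℕ} (hmap : ∀ i, i < k → f i < k)
    (hinj : Function.Injective f) {v y : ℕ} (hv : v < k) (hy : y ∈ orbitOf f v) :
    orbitOf f y = orbitOf f v := by
  obtain ⟨j, rfl⟩ := hy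
  obtain ⟨c, hc, hcv⟩ := orbit_return hmap hinj hv
  have hper : ∀ t, f^[c*t] v = v := by
    intro t; induction t with
    | zero => simp
    | succ t ih => rw [Nat.mul_succ, Function.iterate_add_apply, hcv, ih]
  have hj : j ≤ c * j := Nat.le_mul_of_pos_left j hc
  have hv' : f^[c*j - j] (f^[j] v) = v := by
    rw [← Function.iterate_add_apply, Nat.sub_add_cancel hj]
    exact hper j
  apply subset_antisymm
  · rintro z ⟨i, rfl⟩
    exact ⟨i + j, Function.iterate_add_apply f i j v⟩
  · rintro z ⟨i, rfl⟩
    exact ⟨i + (c*j - j), by rw [Function.iterate_add_apply, hv']⟩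

lemma inv_inj {f : ℕ → ℕ} (h : ∀ i, f (f i) = i) : Function.Injective f :=
  fun a b hab => by rw [← h a, hab, h]

lemma gammaOne_injective (k : ℕ) : Function.Injective (gammaOne k) := by
  intro a b h
  unfold gammaOne at h
  split_ifs at h <;> omega

lemma gammaTwo_injective (m k : ℕ) (h1 : 1 ≤ m) (h2 : m < k) :
    Function.Injective (gammaTwo m k) := by
  intro a b h
  unfold gammaTwo at h
  split_ifs at h <;> omega

lemma numCyclesOn_eq_image (f : ℕ → ℕ) (k : ℕ) :
    numCyclesOn f k = (orbitOf f '' Set.Iio k).ncard := by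
  unfold numCyclesOn
  congr 1
  ext S
  constructor
  · rintro ⟨x, hx, rfl⟩; exact ⟨x, hx, rfl⟩
  · rintro ⟨x, hx, rfl⟩; exact ⟨x, hx, rfl⟩

lemma numCyclesOn_eq_of (f f' p : ℕ → ℕ) (k k' : ℕ)
    (hpk : ∀ v, v < k → p v < k')
    (hmap : ∀ i, i < k → f i < k)
    (hmap' : ∀ i, i < k' → f' i < k')
    (hinj : Function.Injective f)
    (hinj' : Function.Injective f')
    (hb : ∀ v, v < k → ∀ w, w < k → (w ∈ orbitOf f v ↔ p w ∈ orbitOf f' (p v)))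
    (hc : ∀ u, u < k' → ∃ v, v < k ∧ p v ∈ orbitOf f' u) :
    numCyclesOn f k = numCyclesOn f' k' := by
  have key : ∀ v, v < k → orbitOf f' (p (sInf (orbitOf f v))) = orbitOf f' (p v) := by
    intro v hv
    have hne : (orbitOf f v).Nonempty := ⟨v, mem_orbit_self f v⟩
    have hmem : sInf (orbitOf f v) ∈ orbitOf f v := Nat.sInf_mem hne
    have hsub : orbitOf f v ⊆ Set.Iio k :=
      orbit_invariant (Set.Iio k) (fun x hx => hmap x hx) hv
    have hlt : sInf (orbitOf f v) < k := hsub hmem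
    exact orbit_eq_of_mem hmap' hinj' (hpk v hv) ((hb v hv _ hlt).mp hmem)
  have hinjOn : Set.InjOn (fun S => orbitOf f' (p (sInf S))) (orbitOf f '' Set.Iio k) := by
    rintro S ⟨v, hv, rfl⟩ T ⟨w, hw, rfl⟩ hST
    have hv' : v < k := hv
    have hw' : w < k := hw
    have hST' : orbitOf f' (p (sInf (orbitOf f v))) = orbitOf f' (p (sInf (orbitOf f w))) := hST
    rw [key v hv', key w hw'] at hST'
    have hmem : p w ∈ orbitOf f' (p v) := hST' ▸ mem_orbit_self f' (p w)
    have hw2 := (hb v hv' w hw').mpr hmem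
    exact (orbit_eq_of_mem hmap hinj hv' hw2).symm
  have himg : (fun S => orbitOf f' (p (sInf S))) '' (orbitOf f '' Set.Iio k)
      = orbitOf f' '' Set.Iio k' := by
    apply subset_antisymm
    · rintro S ⟨T, ⟨v, hv, rfl⟩, rfl⟩
      have hv' : v < k := hv
      exact ⟨p v, hpk v hv', (key v hv').symm⟩
    · rintro S ⟨u, hu, rfl⟩
      have hu' : u < k' := hu
      obtain ⟨v, hv, hvu⟩ := hc u hu'
      have he : orbitOf f' (p v) = orbitOf f' u := orbit_eq_of_mem hmap' hinj' hu' hvu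
      refine ⟨orbitOf f v, ⟨v, hv, rfl⟩, ?_⟩
      show orbitOf f' (p (sInf (orbitOf f v))) = orbitOf f' u
      rw [key v hv, he]
  rw [numCyclesOn_eq_image f k, numCyclesOn_eq_image f' k',
    ← Set.ncard_image_of_injOn hinjOn, himg]

end AuxGlue

/-- If `x` is a connected 2-backbone shape of genus `g` with `n`
arcs, then the glued diagram `η(x)` is an A-shape over one backbone of genus `g+1`
with `n+1` arcs; moreover `η` preserves the number of boundary components. -/
theorem glue_is_A_shape (g n : ℕ) (x : TwoD) (hWF : x.WF) (hShape : x.IsShape)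
    (hConn : x.Connected) (hGenus : x.HasGenus g) (hn : x.n = n) :
    (glue x).WF ∧ (glue x).IsShape ∧ (glue x).IsA ∧
    (glue x).HasGenus (g + 1) ∧ (glue x).n = n + 1 ∧ (glue x).r = x.r := by
  obtain ⟨hm1, hm2, hfmap, hffix, hfinv, hfnf⟩ := hWF
  obtain ⟨hm2', hm2n, hf0, hfM, h1arc, hstack⟩ := hShape
  have hfM1 : x.f (x.m - 1) = 0 := by have h := hfinv 0; rw [hf0] at h; exact h
  have hf2N : x.f (2*x.n - 1) = x.m := by have h := hfinv x.m; rw [hfM] at h; exact h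
  -- connectivity consequences
  have hM3 : 3 ≤ x.m := by
    by_contra h
    have hm : x.m = 2 := by omega
    obtain ⟨i, j, ⟨hi2n, hfi⟩, hiM, hMj⟩ := hConn
    have : i = 0 ∨ i = 1 := by omega
    rcases this with rfl|rfl
    · rw [hf0, hm] at hfi; omega
    · have : x.f 1 = 0 := by
        have := hfM1; rw [hm] at this; exact this
      rw [this] at hfi; omega
  have hM3' : x.m + 3 ≤ 2 * x.n := by
    by_contra h
    have hm : x.m + 2 = 2 * x.n := by omega
    obtain ⟨i, j, ⟨hi2n, hfi⟩, hiM, hMj⟩ := hConn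
    have hj2n : j < 2 * x.n := by rw [← hfi]; exact hfmap i (by omega)
    have hj : j = x.m ∨ j = x.m + 1 := by omega
    rcases hj with rfl|rfl
    · have : i = 2*x.n - 1 := by
        have h2 := hfinv i; rw [hfi, hfM] at h2; omega
      omega
    · have hM1 : x.f (x.m + 1) = x.m := by
        have : x.m + 1 = 2*x.n - 1 := by omega
        rw [this, hf2N]
      have : i = x.m + 1 := by
        have h2 := hfinv i; rw [hfi, hM1] at h2; omega
      omega
  -- glue function computations
  have hF0 : (glue x).f 0 = 2*x.n + 1 := by simp [glue]
  have hFtop : (glue x).f (2*x.n + 1) = 0 := by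
    show (if 2*x.n+1 = 0 then 2*x.n+1 else if 2*x.n+1 = 2*x.n+1 then 0
      else if 2*x.n+1 ≤ 2*x.n then x.f (2*x.n+1-1) + 1 else 2*x.n+1) = 0
    rw [if_neg (by omega), if_pos rfl]
  have hFmid : ∀ i, 1 ≤ i → i ≤ 2*x.n → (glue x).f i = x.f (i-1) + 1 := by
    intro i h1 h2
    show (if i = 0 then 2*x.n+1 else if i = 2*x.n+1 then 0
      else if i ≤ 2*x.n then x.f (i-1) + 1 else i) = x.f (i-1) + 1
    rw [if_neg (by omega), if_neg (by omega), if_pos h2]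
  have hFhigh : ∀ i, 2*x.n + 2 ≤ i → (glue x).f i = i := by
    intro i h1
    show (if i = 0 then 2*x.n+1 else if i = 2*x.n+1 then 0
      else if i ≤ 2*x.n then x.f (i-1) + 1 else i) = i
    rw [if_neg (by omega), if_neg (by omega), if_neg (by omega)]
  -- WF of glue
  have hGWF : (glue x).WF := by
    refine ⟨?_, ?_, ?_, ?_, ?_, ?_⟩
    · show 1 ≤ x.n + 1; omega
    · intro i hi
      have hi' : i < 2*(x.n+1) := hi
      show (glue x).f i < 2*(x.n+1)
      rcases eq_or_ne i 0 with rfl|h0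
      · rw [hF0]; omega
      rcases eq_or_ne i (2*x.n+1) with rfl|h1
      · rw [hFtop]; omega
      rw [hFmid i (by omega) (by omega)]
      have := hfmap (i-1) (by omega); omega
    · intro i hi
      have hi' : 2*(x.n+1) ≤ i := hi
      exact hFhigh i (by omega)
    · intro i
      rcases eq_or_ne i 0 with rfl|h0
      · rw [hF0, hFtop]
      rcases eq_or_ne i (2*x.n+1) with rfl|h1
      · rw [hFtop, hF0]
      rcases le_or_gt i (2*x.n) with h2|h2
      · rw [hFmid i (by omega) h2]
        have ha : x.f (i-1) < 2*x.n := hfmap _ (by omega)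
        rw [hFmid _ (by omega) (by omega)]
        simp only [Nat.add_sub_cancel]
        rw [hfinv]
        omega
      · rw [hFhigh i (by omega), hFhigh i (by omega)]
    · intro i hi
      have hi' : i < 2*(x.n+1) := hi
      rcases eq_or_ne i 0 with rfl|h0
      · rw [hF0]; omega
      rcases eq_or_ne i (2*x.n+1) with rfl|h1
      · rw [hFtop]; omega
      rw [hFmid i (by omega) (by omega)]
      have := hfnf (i-1) (by omega); omega
    · show (glue x).f 0 = 2*(x.n+1) - 1
      rw [hF0]; omega
  -- IsShape of glue
  have hGShape : (glue x).IsShape := by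
    constructor
    · rintro i ⟨hi, hfi⟩
      exfalso
      have hi' : i < 2*(x.n+1) := hi
      rcases eq_or_ne i 0 with rfl|h0
      · rw [hF0] at hfi; omega
      rcases eq_or_ne i (2*x.n+1) with rfl|h1
      · rw [hFtop] at hfi; omega
      rw [hFmid i (by omega) (by omega)] at hfi
      have hfi' : x.f (i-1) = i := by omega
      by_cases hMB : i = x.m
      · rw [hMB] at hfi'
        rw [hfM1] at hfi'
        omega
      · have harc' : x.arc (i-1) ((i-1)+1) := by
          refine ⟨by omega, ?_⟩
          rw [show (i-1)+1 = i by omega]; exact hfi'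
        have hsb' : x.sameBB (i-1) ((i-1)+1) := by
          unfold TwoD.sameBB; omega
        rcases h1arc (i-1) harc' hsb' with ⟨h, h'⟩|⟨h, h'⟩ <;> omega
    · rintro i j ⟨hi, hfi⟩ ⟨hi1, hfi1⟩ hlt
      have hi' : i < 2*(x.n+1) := hi
      have hi1' : i+1 < 2*(x.n+1) := hi1
      rcases eq_or_ne i 0 with rfl|h0
      · rw [hF0] at hfi
        subst hfi
        rw [hFmid 1 le_rfl (by omega)] at hfi1
        have : x.f (1-1) = x.f 0 := rfl
        rw [this, hf0] at hfi1
        omega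
      rw [hFmid i (by omega) (by omega)] at hfi
      have hj : j ≤ 2*x.n := by
        have := hfmap (i-1) (by omega); omega
      rw [hFmid (i+1) (by omega) (by omega)] at hfi1
      simp only [Nat.add_sub_cancel] at hfi1
      have hfa : x.f (i-1) = j-1 := by omega
      have hfb : x.f i = j-2 := by omega
      by_cases hiM : i = x.m
      · rw [hiM, hfM1] at hfa; omega
      by_cases hjM : j - 1 = x.m
      · have h2 : x.f (x.f (i-1)) = i-1 := hfinv _
        rw [hfa, hjM, hfM] at h2
        omega
      have harc1 : x.arc (i-1) (j-1) := ⟨by omega, hfa⟩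
      have harc2 : x.arc ((i-1)+1) ((j-1)-1) := by
        refine ⟨by omega, ?_⟩
        rw [show (i-1)+1 = i by omega, show (j-1)-1 = j-2 by omega]
        exact hfb
      have hsb1 : x.sameBB (i-1) ((i-1)+1) := by unfold TwoD.sameBB; omega
      have hsb2 : x.sameBB ((j-1)-1) (j-1) := by unfold TwoD.sameBB; omega
      exact hstack (i-1) (j-1) harc1 harc2 hsb1 hsb2 (by omega)
  -- IsA
  have hF1 : (glue x).f 1 = x.m := by
    rw [hFmid 1 le_rfl (by omega)]
    have : x.f (1-1) = x.f 0 := rfl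
    rw [this, hf0]; omega
  have hGA : (glue x).IsA := by
    constructor
    · show 2 ≤ x.n + 1; omega
    · show (glue x).f ((glue x).f 1 + 1) = 2*(x.n+1) - 2
      rw [hF1, hFmid (x.m+1) (by omega) (by omega)]
      simp only [Nat.add_sub_cancel]
      rw [hfM]; omega
  -- boundary computations for x
  have hb1 : ∀ v, v < 2*x.n → v+1 ≠ x.m → v+1 ≠ 2*x.n → x.bd v = x.f (v+1) := by
    intro v hv h1 h2
    show x.f (gammaTwo x.m (2*x.n) v) = x.f (v+1)
    unfold gammaTwo
    rw [if_neg h1, if_neg h2, if_pos hv]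
  have hb1m : x.bd (x.m - 1) = x.m - 1 := by
    show x.f (gammaTwo x.m (2*x.n) (x.m-1)) = x.m - 1
    unfold gammaTwo
    rw [if_pos (by omega), hf0]
  have hb1n : x.bd (2*x.n - 1) = 2*x.n - 1 := by
    show x.f (gammaTwo x.m (2*x.n) (2*x.n-1)) = 2*x.n - 1
    unfold gammaTwo
    rw [if_neg (by omega), if_pos (by omega), hfM]
  -- boundary computations for glue x
  have hbd2 : ∀ v, (glue x).bd v = (glue x).f (gammaOne (2*(x.n+1)) v) := fun v => rfl
  have hg1 : ∀ v, v < 2*x.n + 1 → gammaOne (2*(x.n+1)) v = v + 1 := by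
    intro v hv; unfold gammaOne; rw [if_neg (by omega), if_pos (by omega)]
  have hg1top : gammaOne (2*(x.n+1)) (2*x.n+1) = 0 := by
    unfold gammaOne; rw [if_pos (by omega)]
  have hb2_0 : (glue x).bd 0 = x.m := by
    rw [hbd2, hg1 0 (by omega), hFmid 1 le_rfl (by omega)]
    have : x.f (1-1) = x.f 0 := rfl
    rw [this, hf0]; omega
  have hb2_mid : ∀ v, 1 ≤ v → v ≤ 2*x.n - 1 → (glue x).bd v = x.f v + 1 := by
    intro v h1 h2
    rw [hbd2, hg1 v (by omega), hFmid (v+1) (by omega) (by omega)]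
    simp only [Nat.add_sub_cancel]
  have hb2_2n : (glue x).bd (2*x.n) = 0 := by
    rw [hbd2, hg1 _ (by omega), hFtop]
  have hb2_top : (glue x).bd (2*x.n+1) = 2*x.n+1 := by
    rw [hbd2, hg1top, hF0]
  have hb2_m : (glue x).bd x.m = 2*x.n := by
    rw [hb2_mid x.m (by omega) (by omega), hfM]; omega
  -- injectivity and maps-to
  have hGmap := hGWF.2.1
  have hGinv := hGWF.2.2.2.1
  have hbinj1 : Function.Injective x.bd := by
    show Function.Injective (x.f ∘ gammaTwo x.m (2*x.n))
    exact (inv_inj hfinv).comp (gammaTwo_injective x.m (2*x.n) hm1 hm2)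
  have hbinj2 : Function.Injective (glue x).bd := by
    show Function.Injective ((glue x).f ∘ gammaOne (2*(glue x).n))
    exact (inv_inj hGinv).comp (gammaOne_injective _)
  have hbmap1 : ∀ i, i < 2*x.n → x.bd i < 2*x.n := by
    intro i hi
    have hg : gammaTwo x.m (2*x.n) i < 2*x.n := by
      unfold gammaTwo; split_ifs <;> omega
    show x.f (gammaTwo x.m (2*x.n) i) < 2*x.n
    exact hfmap _ hg
  have hbmap2 : ∀ i, i < 2*(x.n+1) → (glue x).bd i < 2*(x.n+1) := by
    intro i hi
    have hg : gammaOne (2*(x.n+1)) i < 2*(x.n+1) := by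
      unfold gammaOne; split_ifs <;> omega
    rw [hbd2]
    exact hGmap _ hg
  -- special orbits
  have horbm : orbitOf x.bd (x.m - 1) = {x.m - 1} := orbit_fixed hb1m
  have horbn : orbitOf x.bd (2*x.n - 1) = {2*x.n - 1} := orbit_fixed hb1n
  have horbtop : orbitOf (glue x).bd (2*x.n+1) = {2*x.n+1} := orbit_fixed hb2_top
  have horbM : orbitOf (glue x).bd x.m ⊆ {0, x.m, 2*x.n} := by
    refine orbit_invariant ({0, x.m, 2*x.n} : Set ℕ) ?_ (by simp)
    intro y hy
    simp only [Set.mem_insert_iff, Set.mem_singleton_iff] at hy ⊢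
    rcases hy with rfl|rfl|rfl
    · rw [hb2_0]; tauto
    · rw [hb2_m]; tauto
    · rw [hb2_2n]; tauto
  -- the semiconjugacy on good points
  have hT : ∀ v, v < 2*x.n → v ≠ x.m - 1 → v ≠ 2*x.n - 1 →
      (x.bd v < 2*x.n ∧ x.bd v ≠ x.m - 1 ∧ x.bd v ≠ 2*x.n - 1 ∧
        (glue x).bd (v+1) = x.bd v + 1) := by
    intro v hv h1 h2
    have he : x.bd v = x.f (v+1) := hb1 v hv (by omega) (by omega)
    have hlt : x.f (v+1) < 2*x.n := hfmap _ (by omega)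
    refine ⟨by rw [he]; exact hlt, ?_, ?_, ?_⟩
    · rw [he]; intro hcon
      have h3 := hfinv (v+1); rw [hcon, hfM1] at h3; omega
    · rw [he]; intro hcon
      have h3 := hfinv (v+1); rw [hcon, hf2N] at h3; omega
    · rw [hb2_mid (v+1) (by omega) (by omega), he]
  have hiter : ∀ j v, v < 2*x.n → v ≠ x.m - 1 → v ≠ 2*x.n - 1 →
      (x.bd^[j] v < 2*x.n ∧ x.bd^[j] v ≠ x.m - 1 ∧ x.bd^[j] v ≠ 2*x.n - 1 ∧
        (glue x).bd^[j] (v+1) = x.bd^[j] v + 1) := by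
    intro j
    induction j with
    | zero => intro v hv h1 h2; exact ⟨hv, h1, h2, rfl⟩
    | succ j ih =>
      intro v hv h1 h2
      obtain ⟨ha, hb, hc, hd⟩ := ih v hv h1 h2
      obtain ⟨ha', hb', hc', hd'⟩ := hT _ ha hb hc
      refine ⟨?_, ?_, ?_, ?_⟩ <;> rw [Function.iterate_succ_apply']
      · exact ha'
      · exact hb'
      · exact hc'
      · rw [Function.iterate_succ_apply', hd, hd']
  -- the vertex map
  set p : ℕ → ℕ := fun v => if v = 2*x.n - 1 then 2*x.n + 1 else v + 1 with hpdef
  have hpA : ∀ w, w ≠ 2*x.n - 1 → p w = w + 1 := by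
    intro w hw; simp only [hpdef]; rw [if_neg hw]
  have hpB : p (2*x.n - 1) = 2*x.n + 1 := by
    simp [hpdef]
  have hpm : p (x.m - 1) = x.m := by
    rw [hpA (x.m - 1) (by omega)]; omega
  have hpk : ∀ v, v < 2*x.n → p v < 2*(x.n+1) := by
    intro v hv
    by_cases h : v = 2*x.n - 1
    · rw [h, hpB]; omega
    · rw [hpA v h]; omega
  -- membership transfer
  have hbij : ∀ v, v < 2*x.n → ∀ w, w < 2*x.n →
      (w ∈ orbitOf x.bd v ↔ p w ∈ orbitOf (glue x).bd (p v)) := by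
    intro v hv w hw
    by_cases hv1 : v = x.m - 1
    · subst hv1
      by_cases hw1 : w = x.m - 1
      · subst hw1
        exact iff_of_true (mem_orbit_self _ _) (mem_orbit_self _ _)
      · rw [horbm, hpm]
        apply iff_of_false
        · intro h; exact hw1 h
        · intro hmem
          by_cases hw2 : w = 2*x.n - 1
          · rw [hw2, hpB] at hmem
            have hin := horbM hmem
            simp only [Set.mem_insert_iff, Set.mem_singleton_iff] at hin
            omega
          · rw [hpA w hw2] at hmem
            have hin := horbM hmem
            simp only [Set.mem_insert_iff, Set.mem_singleton_iff] at hin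
            omega
    by_cases hv2 : v = 2*x.n - 1
    · subst hv2
      rw [horbn, hpB, horbtop]
      by_cases hw2 : w = 2*x.n - 1
      · rw [hw2, hpB]
        exact iff_of_true rfl rfl
      · rw [hpA w hw2]
        simp only [Set.mem_singleton_iff]
        omega
    · rw [hpA v hv2]
      by_cases hw1 : w = x.m - 1
      · subst hw1
        apply iff_of_false
        · rintro ⟨j, hj⟩; exact (hiter j v hv hv1 hv2).2.1 hj
        · rintro ⟨j, hj⟩
          rw [hpm, (hiter j v hv hv1 hv2).2.2.2] at hj
          have h5 := (hiter j v hv hv1 hv2).2.1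
          have h6 := (hiter j v hv hv1 hv2).1
          omega
      by_cases hw2 : w = 2*x.n - 1
      · subst hw2
        apply iff_of_false
        · rintro ⟨j, hj⟩; exact (hiter j v hv hv1 hv2).2.2.1 hj
        · rintro ⟨j, hj⟩
          rw [hpB, (hiter j v hv hv1 hv2).2.2.2] at hj
          have h6 := (hiter j v hv hv1 hv2).1
          omega
      · rw [hpA w hw2]
        constructor
        · rintro ⟨j, hj⟩
          exact ⟨j, by rw [(hiter j v hv hv1 hv2).2.2.2, hj]⟩
        · rintro ⟨j, hj⟩
          rw [(hiter j v hv hv1 hv2).2.2.2] at hj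
          exact ⟨j, by omega⟩
  -- covering
  have hcov : ∀ u, u < 2*(x.n+1) → ∃ v, v < 2*x.n ∧ p v ∈ orbitOf (glue x).bd u := by
    intro u hu
    rcases eq_or_ne u 0 with rfl|h0
    · refine ⟨x.m - 1, by omega, ?_⟩
      rw [hpm]
      exact ⟨1, by rw [Function.iterate_one, hb2_0]⟩
    rcases eq_or_ne u (2*x.n) with rfl|h1
    · refine ⟨x.m - 1, by omega, ?_⟩
      rw [hpm]
      refine ⟨2, ?_⟩
      show (glue x).bd ((glue x).bd^[1] (2*x.n)) = x.m
      rw [Function.iterate_one, hb2_2n, hb2_0]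
    rcases eq_or_ne u (2*x.n+1) with rfl|h2
    · refine ⟨2*x.n - 1, by omega, ?_⟩
      rw [hpB]
      exact mem_orbit_self _ _
    · refine ⟨u - 1, by omega, ?_⟩
      have : p (u-1) = u := by
        rw [hpA (u-1) (by omega)]; omega
      rw [this]
      exact mem_orbit_self _ _
  -- r is preserved
  have hr : (glue x).r = x.r := by
    show numCyclesOn (glue x).bd (2*(glue x).n) = numCyclesOn x.bd (2*x.n)
    have := numCyclesOn_eq_of x.bd (glue x).bd p (2*x.n) (2*(x.n+1))
      hpk hbmap1 hbmap2 hbinj1 hbinj2 hbij hcov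
    exact this.symm
  refine ⟨hGWF, hGShape, hGA, ?_, ?_, hr⟩
  · show 2*(g+1) + (glue x).r = (glue x).n + 1
    rw [hr]
    show 2*(g+1) + x.r = (x.n + 1) + 1
    have hGenus' : 2*g + x.r = x.n := hGenus
    omega
  · show x.n + 1 = n + 1
    omega

end RNA
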